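/- Let A be a commutative ℂ-algebra equipped with a Poisson bracket, and let S ⊆ A be a subset that generates A as a Poisson algebra, i.e., the smallest ℂ-subalgebra of A containing S and closed under the bracket is A itself. Then the ℂ-linear span of all brackets {a,b} with a, b ∈ A equals the ℂ-linear span of all brackets {s,a} with s ∈ S and a ∈ A; in symbols, {A, A} = {S, A}. -/

import Mathlib

/-!
The elements `x` with `{x, A} ⊆ {S, A}` contain `S`, form a subalgebra because
`{xy, z} = {x, yz} + {y, xz}`, and are closed under the bracket because Jacobi gives
`{{a, b}, z} = {a, {b, z}} - {b, {a, z}}`. Since `S` generates `A` as a Poisson algebra,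
they exhaust `A`.
-/

namespace PoissonBracket

variable {R A : Type*} [CommRing R] [CommRing A] [Algebra R A] (br : A →ₗ[R] A →ₗ[R] A)

theorem bracket_one_right (leib : ∀ a b c : A, br a (b * c) = br a b * c + b * br a c)
    (y : A) : br y 1 = 0 := by
  simpa using leib y 1 1

theorem bracket_one_left (anti : ∀ a b : A, br a b = - br b a)
    (leib : ∀ a b c : A, br a (b * c) = br a b * c + b * br a c) (y : A) : br 1 y = 0 := by
  rw [anti, bracket_one_right br leib, neg_zero]

theorem bracket_mul_left (anti : ∀ a b : A, br a b = - br b a)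
    (leib : ∀ a b c : A, br a (b * c) = br a b * c + b * br a c) (x y z : A) :
    br (x * y) z = br x (y * z) + br y (x * z) := by
  linear_combination anti (x * y) z - leib z x y - leib x y z - leib y x z - y * anti z x -
    x * anti z y - z * anti x y

def bracketIntoSubalgebra (anti : ∀ a b : A, br a b = - br b a)
    (leib : ∀ a b c : A, br a (b * c) = br a b * c + b * br a c) (M : Submodule R A) :
    Subalgebra R A where
  carrier := {x | ∀ y, br x y ∈ M}
  mul_mem' {x y} hx hy z := by
    rw [bracket_mul_left br anti leib]
    exact add_mem (hx _) (hy _)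
  add_mem' {x y} hx hy z := by
    rw [map_add, LinearMap.add_apply]
    exact add_mem (hx z) (hy z)
  algebraMap_mem' c z := by
    rw [Algebra.algebraMap_eq_smul_one, map_smul, LinearMap.smul_apply,
      bracket_one_left br anti leib, smul_zero]
    exact zero_mem M

variable {br}

theorem mem_bracketIntoSubalgebra {anti : ∀ a b : A, br a b = - br b a}
    {leib : ∀ a b c : A, br a (b * c) = br a b * c + b * br a c} {M : Submodule R A} {x : A} :
    x ∈ bracketIntoSubalgebra br anti leib M ↔ ∀ y, br x y ∈ M :=
  Iff.rfl

theorem bracket_mem_bracketIntoSubalgebra {anti : ∀ a b : A, br a b = - br b a}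
    {leib : ∀ a b c : A, br a (b * c) = br a b * c + b * br a c}
    (jac : ∀ a b c : A, br a (br b c) = br (br a b) c + br b (br a c)) {M : Submodule R A}
    {a b : A} (ha : a ∈ bracketIntoSubalgebra br anti leib M)
    (hb : b ∈ bracketIntoSubalgebra br anti leib M) :
    br a b ∈ bracketIntoSubalgebra br anti leib M := by
  rw [mem_bracketIntoSubalgebra] at ha hb ⊢
  intro z
  rw [eq_sub_of_add_eq (jac a b z).symm]
  exact sub_mem (ha _) (hb _)

end PoissonBracket

open PoissonBracket in
/-- If `S` generates the commutative ℂ-algebra `A` as a *Poisson* algebra (i.e. every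
ℂ-subalgebra containing `S` and closed under the bracket is all of `A`), then
`{A, A} = {S, A}` as ℂ-linear spans. -/
theorem stmt11 (A : Type*) [CommRing A] [Algebra ℂ A]
    (br : A →ₗ[ℂ] A →ₗ[ℂ] A)
    (anti : ∀ a b : A, br a b = - br b a)
    (leib : ∀ a b c : A, br a (b * c) = br a b * c + b * br a c)
    (jac : ∀ a b c : A, br a (br b c) = br (br a b) c + br b (br a c))
    (S : Set A)
    (hS : ∀ T : Subalgebra ℂ A, S ⊆ T → (∀ a ∈ T, ∀ b ∈ T, br a b ∈ T) → T = ⊤) :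
    Submodule.span ℂ {p : A | ∃ a b : A, br a b = p} =
      Submodule.span ℂ {p : A | ∃ s ∈ S, ∃ a : A, br s a = p} := by
  set M := Submodule.span ℂ {p : A | ∃ s ∈ S, ∃ a : A, br s a = p}
  have hT : bracketIntoSubalgebra br anti leib M = ⊤ :=
    hS _ (fun s hs a => Submodule.subset_span ⟨s, hs, a, rfl⟩) fun _ ha _ hb =>
      bracket_mem_bracketIntoSubalgebra jac ha hb
  refine le_antisymm (Submodule.span_le.mpr ?_) (Submodule.span_mono ?_)
  · rintro _ ⟨a, b, rfl⟩
    exact mem_bracketIntoSubalgebra.mp (hT ▸ Algebra.mem_top) b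
  · rintro _ ⟨s, -, a, rfl⟩
    exact ⟨s, a, rfl⟩
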